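/- (Ergodic O(1/N) rate.) Under the standing assumption, let (x^{k+1}, ỹ^{k+1}, y^{k+1}), k = 0, 1, 2, …, be the sequence generated by SPIDA from (x^0, y^0) ∈ X × Y. For a positive integer N define the ergodic averages x̂^N = (1/N) Σ_{k=1}^{N} x^k and ŷ^N = (1/N) Σ_{k=1}^{N} ỹ^k. Then for every x ∈ X and y ∈ Y: L(x̂^N, y) − L(x, ŷ^N) ≤ (1/N)(γ B_φ(y, y^0) + μ B_ψ(x, x^0)). -/

import Mathlib

/-!
Each SPIDA update is a Bregman proximal step, so the three-point inequality bounds the partial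
objectives by differences of Bregman distances. Adding the three inequalities of one iteration
leaves the coupling term `⟪A (x^{k+1} - x^k), y^{k+1} - ỹ^{k+1}⟫`; by Young's inequality and the
step-size condition it is absorbed by the Bregman distances of the strongly convex kernels, and
what remains is a telescoping bound on `L(x^{k+1}, y) - L(x, ỹ^{k+1})`. Summing over `k` and using
that `L` is convex in `x` and concave in `y` (Jensen) passes to the ergodic averages.
-/

noncomputable section
open scoped RealInnerProductSpace
open Filter

abbrev Euc (d : ℕ) : Type := EuclideanSpace ℝ (Fin d)

/-- Bregman distance associated with kernel `φ` whose gradient map is `φ'`. -/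
def Breg {d : ℕ} (φ : Euc d → ℝ) (φ' : Euc d → Euc d) (x y : Euc d) : ℝ :=
  φ x - φ y - ⟪φ' y, x - y⟫

/-- The convex-concave Lagrangian `L(x,y) = f(x) + ⟨Ax, y⟩ − g(y)`. -/
def Lag {n m : ℕ} (f : Euc n → ℝ) (g : Euc m → ℝ) (A : Euc n →L[ℝ] Euc m)
    (x : Euc n) (y : Euc m) : ℝ := f x + ⟪A x, y⟫ - g y

open Set Finset

section Gradient

variable {E : Type*} [NormedAddCommGroup E] [InnerProductSpace ℝ E] [CompleteSpace E]
  {f g : E → ℝ} {f' g' x : E}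

theorem HasGradientAt.sub (hf : HasGradientAt f f' x) (hg : HasGradientAt g g' x) :
    HasGradientAt (fun z => f z - g z) (f' - g') x := by
  rw [hasGradientAt_iff_hasFDerivAt, map_sub]
  exact (hasGradientAt_iff_hasFDerivAt.mp hf).sub (hasGradientAt_iff_hasFDerivAt.mp hg)

theorem HasGradientAt.const_mul (hf : HasGradientAt f f' x) (c : ℝ) :
    HasGradientAt (fun z => c * f z) (c • f') x := by
  rw [hasGradientAt_iff_hasFDerivAt, map_smul]
  exact (hasGradientAt_iff_hasFDerivAt.mp hf).const_mul c

theorem hasGradientAt_half_mul_sq_norm (c : ℝ) (x : E) :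
    HasGradientAt (fun z => c / 2 * ‖z‖ ^ 2) (c • x) x := by
  rw [hasGradientAt_iff_hasFDerivAt]
  refine ((hasStrictFDerivAt_norm_sq x).hasFDerivAt.const_mul (c / 2)).congr_fderiv ?_
  ext v
  simp only [smul_apply, coe_innerSL_apply, nsmul_eq_mul, Nat.cast_ofNat, smul_eq_mul, map_smul,
    InnerProductSpace.toDual_apply_apply]
  ring

theorem HasGradientAt.hasLineDerivAt (hf : HasGradientAt f f' x) (v : E) :
    HasLineDerivAt ℝ f ⟪f', v⟫ x v := by
  simpa using (hasGradientAt_iff_hasFDerivAt.mp hf).hasLineDerivAt v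

theorem ConvexOn.add_inner_sub_le_of_hasGradientAt (hf : ConvexOn ℝ univ f)
    (hx : HasGradientAt f f' x) (y : E) : f x + ⟪f', y - x⟫ ≤ f y := by
  have hline : ConvexOn ℝ univ (fun t : ℝ => f (x + t • (y - x))) := by
    have hmap : f ∘ AffineMap.lineMap x y = fun t : ℝ => f (x + t • (y - x)) := by
      ext t
      rw [Function.comp_apply, AffineMap.lineMap_apply, vsub_eq_sub, vadd_eq_add, add_comm]
    have := hf.comp_affineMap (AffineMap.lineMap x y)
    rwa [preimage_univ, hmap] at this
  have := hline.le_slope_of_hasDerivAt (mem_univ 0) (mem_univ 1) one_pos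
    (hx.hasLineDerivAt (y - x))
  simp only [slope, sub_zero, inv_one, one_smul, add_sub_cancel, zero_smul, add_zero, vsub_eq_sub,
    smul_eq_mul, one_mul] at this
  linarith

theorem IsMinOn.le_add_inner_of_hasGradientAt {C : Set E} (hC : Convex ℝ C)
    (hf : ConvexOn ℝ C f) (hg : HasGradientAt g g' x)
    (hmin : IsMinOn (fun z => f z + g z) C x) (hx : x ∈ C) {z : E} (hz : z ∈ C) :
    f x ≤ f z + ⟪g', z - x⟫ := by
  have hslope : ∀ t ∈ Ioc (0 : ℝ) 1, f x - f z ≤ t⁻¹ • (g (x + t • (z - x)) - g x) := by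
    rintro t ⟨ht₀, ht₁⟩
    have hmem : x + t • (z - x) ∈ C := hC.add_smul_sub_mem hx hz ⟨ht₀.le, ht₁⟩
    have hconv : f (x + t • (z - x)) ≤ (1 - t) * f x + t * f z := by
      have hpt : x + t • (z - x) = (1 - t) • x + t • z := by module
      rw [hpt]
      simpa only [smul_eq_mul] using hf.2 hx hz (sub_nonneg.2 ht₁) ht₀.le (sub_add_cancel 1 t)
    have hle := isMinOn_iff.mp hmin _ hmem
    rw [smul_eq_mul, le_inv_mul_iff₀ ht₀]
    nlinarith
  have := ge_of_tendsto (hg.hasLineDerivAt (z - x)).tendsto_slope_zero_right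
    (by filter_upwards [Ioc_mem_nhdsGT one_pos] using hslope)
  linarith

end Gradient

section Bregman

variable {d : ℕ} {φ χ : Euc d → ℝ} {φ' χ' : Euc d → Euc d}

theorem breg_sub (u v : Euc d) :
    Breg (fun z => φ z - χ z) (fun z => φ' z - χ' z) u v = Breg φ φ' u v - Breg χ χ' u v := by
  simp only [Breg, inner_sub_left]
  ring

theorem breg_const_mul (c : ℝ) (u v : Euc d) :
    Breg (fun z => c * φ z) (fun z => c • φ' z) u v = c * Breg φ φ' u v := by
  simp only [Breg, real_inner_smul_left]
  ring

theorem breg_half_mul_sq_norm (c : ℝ) (u v : Euc d) :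
    Breg (fun z => c / 2 * ‖z‖ ^ 2) (fun z => c • z) u v = c / 2 * ‖u - v‖ ^ 2 := by
  simp only [Breg, norm_sub_sq_real, real_inner_smul_left, inner_sub_right,
    real_inner_self_eq_norm_sq, real_inner_comm u v]
  ring

theorem breg_nonneg (hφ : ConvexOn ℝ univ φ) (hφ' : ∀ z, HasGradientAt φ (φ' z) z)
    (u v : Euc d) : 0 ≤ Breg φ φ' u v := by
  have := hφ.add_inner_sub_le_of_hasGradientAt (hφ' v) u
  rw [Breg]
  linarith

theorem half_mul_sq_norm_sub_le_breg {ϱ : ℝ}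
    (hφ : ConvexOn ℝ univ (fun z => φ z - ϱ / 2 * ‖z‖ ^ 2))
    (hφ' : ∀ z, HasGradientAt φ (φ' z) z) (u v : Euc d) :
    ϱ / 2 * ‖u - v‖ ^ 2 ≤ Breg φ φ' u v := by
  have := breg_nonneg hφ (fun z => (hφ' z).sub (hasGradientAt_half_mul_sq_norm ϱ z)) u v
  rw [breg_sub, breg_half_mul_sq_norm] at this
  linarith

theorem breg_le_const_mul_breg {c : ℝ} (hφ : ConvexOn ℝ univ (fun z => c * χ z - φ z))
    (hχ' : ∀ z, HasGradientAt χ (χ' z) z) (hφ' : ∀ z, HasGradientAt φ (φ' z) z) (u v : Euc d) :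
    Breg φ φ' u v ≤ c * Breg χ χ' u v := by
  have := breg_nonneg hφ (fun z => ((hχ' z).const_mul c).sub (hφ' z)) u v
  rw [breg_sub, breg_const_mul] at this
  linarith

theorem inner_sub_eq_breg_three_point (u w z : Euc d) :
    ⟪φ' u - φ' w, z - u⟫ = Breg φ φ' z w - Breg φ φ' z u - Breg φ φ' u w := by
  simp only [Breg, inner_sub_left, inner_sub_right]
  ring

theorem hasGradientAt_breg_left {u : Euc d} (hu : HasGradientAt φ (φ' u) u) (w : Euc d) :
    HasGradientAt (fun z => Breg φ φ' z w) (φ' u - φ' w) u := by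
  rw [hasGradientAt_iff_hasFDerivAt, map_sub]
  have hlin : HasFDerivAt (fun z => ⟪φ' w, z - w⟫) (InnerProductSpace.toDual ℝ _ (φ' w)) u := by
    simpa [inner_sub_right] using
      ((InnerProductSpace.toDual ℝ _ (φ' w)).hasFDerivAt (x := u)).sub_const ⟪φ' w, w⟫
  exact ((hasGradientAt_iff_hasFDerivAt.mp hu).sub_const (φ w)).sub hlin

/-- The three-point inequality for a Bregman proximal step. -/
theorem le_add_mul_breg_sub_of_isMinOn {C : Set (Euc d)} (hC : Convex ℝ C) {h : Euc d → ℝ}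
    (hh : ConvexOn ℝ C h) {u w z : Euc d} (hu : HasGradientAt φ (φ' u) u) {c : ℝ}
    (hmin : IsMinOn (fun z => h z + c * Breg φ φ' z w) C u) (huC : u ∈ C) (hzC : z ∈ C) :
    h u ≤ h z + c * (Breg φ φ' z w - Breg φ φ' z u - Breg φ φ' u w) := by
  have := hmin.le_add_inner_of_hasGradientAt hC hh ((hasGradientAt_breg_left hu w).const_mul c)
    huC hzC
  rwa [real_inner_smul_left, inner_sub_eq_breg_three_point] at this

end Bregman

section OperatorNorm

variable {E F : Type*} [NormedAddCommGroup E] [InnerProductSpace ℝ E]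
  [NormedAddCommGroup F] [InnerProductSpace ℝ F]

theorem ContinuousLinearMap.inner_apply_le_of_sq_opNorm_le (A : E →L[ℝ] F) {a b : ℝ}
    (ha : 0 ≤ a) (hb : 0 ≤ b) (hA : ‖A‖ ^ 2 ≤ 4 * a * b) (u : E) (v : F) :
    ⟪A u, v⟫ ≤ a * ‖u‖ ^ 2 + b * ‖v‖ ^ 2 := by
  have hAuv : ⟪A u, v⟫ ≤ ‖A‖ * ‖u‖ * ‖v‖ :=
    (real_inner_le_norm _ _).trans (mul_le_mul_of_nonneg_right (A.le_opNorm u) (norm_nonneg v))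
  have hsq : (‖A‖ * ‖u‖ * ‖v‖) ^ 2 ≤ (a * ‖u‖ ^ 2 + b * ‖v‖ ^ 2) ^ 2 := by
    nlinarith [sq_nonneg (a * ‖u‖ ^ 2 - b * ‖v‖ ^ 2),
      mul_le_mul_of_nonneg_right hA (mul_nonneg (sq_nonneg ‖u‖) (sq_nonneg ‖v‖))]
  have := (pow_le_pow_iff_left₀ (by positivity) (by positivity) two_ne_zero).mp hsq
  linarith

theorem ContinuousLinearMap.mul_sq_opNorm_le_of_le_div [CompleteSpace E] [CompleteSpace F]
    (A : E →L[ℝ] F) {ϱ μ γ α L : ℝ} (hϱ : 0 ≤ ϱ) (hμ : 0 ≤ μ) (hγ : 0 ≤ γ) (hα : 0 < α)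
    (hL₀ : 0 ≤ L) (hαϱγ : 1 ≤ α * ϱ * γ)
    (hL : L ≤ ϱ * μ / (α * ‖(ContinuousLinearMap.adjoint A).comp A‖)) :
    L * ‖A‖ ^ 2 ≤ μ * ϱ * (γ * ϱ) := by
  rw [ContinuousLinearMap.norm_adjoint_comp_self, ← sq] at hL
  have hLA : L * α * ‖A‖ ^ 2 ≤ ϱ * μ := by
    rcases (norm_nonneg A).eq_or_lt with hA | hA
    · rw [← hA, zero_pow two_ne_zero, mul_zero]
      positivity
    · rw [le_div_iff₀ (by positivity)] at hL
      linarith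
  calc L * ‖A‖ ^ 2 ≤ L * ‖A‖ ^ 2 * (α * ϱ * γ) := le_mul_of_one_le_right (by positivity) hαϱγ
    _ = L * α * ‖A‖ ^ 2 * (ϱ * γ) := by ring
    _ ≤ ϱ * μ * (ϱ * γ) := by gcongr
    _ = μ * ϱ * (γ * ϱ) := by ring

end OperatorNorm

section Lagrangian

variable {n m : ℕ} {f : Euc n → ℝ} {g : Euc m → ℝ} (A : Euc n →L[ℝ] Euc m)

theorem convexOn_lag_left (hf : ConvexOn ℝ univ f) (y : Euc m) :
    ConvexOn ℝ univ (fun x => Lag f g A x y) := by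
  refine ⟨convex_univ, fun p _ q _ a b ha hb hab => ?_⟩
  have := hf.2 (mem_univ p) (mem_univ q) ha hb hab
  simp only [Lag, map_add, map_smul, inner_add_left, real_inner_smul_left, smul_eq_mul] at this ⊢
  linear_combination this + g y * hab

theorem concaveOn_lag_right (hg : ConvexOn ℝ univ g) (x : Euc n) :
    ConcaveOn ℝ univ (fun y => Lag f g A x y) := by
  refine ⟨convex_univ, fun p _ q _ a b ha hb hab => ?_⟩
  have := hg.2 (mem_univ p) (mem_univ q) ha hb hab
  simp only [Lag, inner_add_right, real_inner_smul_right, smul_eq_mul] at this ⊢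
  linear_combination this + f x * hab

theorem lag_sub_lag_sub_lag_add_lag (x x' : Euc n) (y y' : Euc m) :
    Lag f g A x' y' - Lag f g A x y' - Lag f g A x' y + Lag f g A x y = ⟪A (x' - x), y' - y⟫ := by
  simp only [Lag, map_sub, inner_sub_left, inner_sub_right]
  ring

theorem lag_average_sub_le {ι : Type*} {s : Finset ι} (hs : s.Nonempty)
    (hf : ConvexOn ℝ univ f) (hg : ConvexOn ℝ univ g) (x : ι → Euc n) (y : ι → Euc m)
    (x₀ : Euc n) (y₀ : Euc m) :
    Lag f g A ((#s : ℝ)⁻¹ • ∑ i ∈ s, x i) y₀ - Lag f g A x₀ ((#s : ℝ)⁻¹ • ∑ i ∈ s, y i) ≤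
      (#s : ℝ)⁻¹ * ∑ i ∈ s, (Lag f g A (x i) y₀ - Lag f g A x₀ (y i)) := by
  have hw : ∑ _i ∈ s, (#s : ℝ)⁻¹ = 1 := by
    rw [sum_const, nsmul_eq_mul, mul_inv_cancel₀ (Nat.cast_ne_zero.2 hs.card_ne_zero)]
  have hx := (convexOn_lag_left (g := g) A hf y₀).map_sum_le (fun _ _ => by positivity) hw
    (fun i _ => mem_univ (x i))
  have hy := (concaveOn_lag_right (f := f) A hg x₀).le_map_sum (fun _ _ => by positivity) hw
    (fun i _ => mem_univ (y i))
  simp only [smul_eq_mul, ← mul_sum] at hx hy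
  rw [smul_sum, smul_sum, sum_sub_distrib, mul_sub]
  linarith

end Lagrangian

theorem sum_Icc_le_sub_of_le_sub_succ {a D : ℕ → ℝ} (h : ∀ k, a (k + 1) ≤ D k - D (k + 1))
    (N : ℕ) : ∑ k ∈ Icc 1 N, a k ≤ D 0 - D N := by
  induction N with
  | zero => simp
  | succ N ih =>
    rw [sum_Icc_succ_top (by omega)]
    linarith [h N]

section Spida

variable {n m : ℕ} {f : Euc n → ℝ} {g : Euc m → ℝ} (A : Euc n →L[ℝ] Euc m) {γ μ : ℝ}
  {φ : Euc m → ℝ} {φ' : Euc m → Euc m} {ψ : Euc n → ℝ} {ψ' : Euc n → Euc n}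

/-- Young's inequality with the weights `a = μϱ/(2L)`, `b = γϱ/2`, for which the step-size
condition reads `‖A‖² ≤ 4ab`. -/
theorem inner_apply_sub_le_add_breg {ϱ L : ℝ} (hϱ : 0 ≤ ϱ) (hμ : 0 ≤ μ) (hγ : 0 ≤ γ)
    (hL : 0 < L) (hA : L * ‖A‖ ^ 2 ≤ μ * ϱ * (γ * ϱ))
    (hψ : ∀ u v, ϱ / 2 * ‖u - v‖ ^ 2 ≤ L * Breg ψ ψ' u v)
    (hφ : ∀ u v, ϱ / 2 * ‖u - v‖ ^ 2 ≤ Breg φ φ' u v) (x x' : Euc n) (y y' : Euc m) :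
    ⟪A (x' - x), y' - y⟫ ≤ μ * Breg ψ ψ' x' x + γ * Breg φ φ' y' y := by
  have h4ab : ‖A‖ ^ 2 ≤ 4 * (μ / L * (ϱ / 2)) * (γ * (ϱ / 2)) := by
    have h4 : 4 * (μ / L * (ϱ / 2)) * (γ * (ϱ / 2)) = μ * ϱ * (γ * ϱ) / L := by
      field_simp
      ring
    rw [h4, le_div_iff₀ hL]
    linarith
  calc ⟪A (x' - x), y' - y⟫
      ≤ μ / L * (ϱ / 2) * ‖x' - x‖ ^ 2 + γ * (ϱ / 2) * ‖y' - y‖ ^ 2 :=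
        A.inner_apply_le_of_sq_opNorm_le (by positivity) (by positivity) h4ab _ _
    _ = μ / L * (ϱ / 2 * ‖x' - x‖ ^ 2) + γ * (ϱ / 2 * ‖y' - y‖ ^ 2) := by ring
    _ ≤ μ / L * (L * Breg ψ ψ' x' x) + γ * Breg φ φ' y' y := by
        gcongr ?_ * ?_ + ?_ * ?_
        exacts [hψ _ _, hφ _ _]
    _ = μ * Breg ψ ψ' x' x + γ * Breg φ φ' y' y := by field_simp

theorem spida_step_lag_sub_le {X : Set (Euc n)} {Y : Set (Euc m)} (hX : Convex ℝ X)
    (hY : Convex ℝ Y) (hf : ConvexOn ℝ univ f) (hg : ConvexOn ℝ univ g) (hγ : 0 ≤ γ)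
    (hφ : ConvexOn ℝ univ φ) (hφ' : ∀ z, HasGradientAt φ (φ' z) z)
    (hψ' : ∀ z, HasGradientAt ψ (ψ' z) z)
    (hcoupling : ∀ x x' y y', ⟪A (x' - x), y' - y⟫ ≤ μ * Breg ψ ψ' x' x + γ * Breg φ φ' y' y)
    {x x' : Euc n} {y yt y' : Euc m}
    (hyt : yt ∈ Y) (hytmin : IsMinOn (fun z => -Lag f g A x z + γ * Breg φ φ' z y) Y yt)
    (hx' : x' ∈ X) (hx'min : IsMinOn (fun z => Lag f g A z yt + μ * Breg ψ ψ' z x) X x')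
    (hy' : y' ∈ Y) (hy'min : IsMinOn (fun z => -Lag f g A x' z + γ * Breg φ φ' z y) Y y')
    {x₀ : Euc n} {y₀ : Euc m} (hx₀ : x₀ ∈ X) (hy₀ : y₀ ∈ Y) :
    Lag f g A x' y₀ - Lag f g A x₀ yt ≤
      γ * (Breg φ φ' y₀ y - Breg φ φ' y₀ y') + μ * (Breg ψ ψ' x₀ x - Breg ψ ψ' x₀ x') := by
  have hconcave (x : Euc n) : ConvexOn ℝ Y (fun z => -Lag f g A x z) :=
    (concaveOn_lag_right A hg x).neg.subset (subset_univ Y) hY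
  have hy'step := le_add_mul_breg_sub_of_isMinOn hY (hconcave x') (hφ' y') hy'min hy' hy₀
  have hytstep := le_add_mul_breg_sub_of_isMinOn hY (hconcave x) (hφ' yt) hytmin hyt hy'
  have hx'step := le_add_mul_breg_sub_of_isMinOn hX
    ((convexOn_lag_left A hf yt).subset (subset_univ X) hX) (hψ' x') hx'min hx' hx₀
  have hcross := hcoupling x x' yt y'
  rw [← lag_sub_lag_sub_lag_add_lag (f := f) (g := g)] at hcross
  have hyty := mul_nonneg hγ (breg_nonneg hφ hφ' yt y)
  linear_combination hy'step + hytstep + hx'step + hcross + hyty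

end Spida

theorem spida_ergodic_rate_general {n m : ℕ}
    (X : Set (Euc n)) (Y : Set (Euc m))
    (hXcv : Convex ℝ X)
    (hYcv : Convex ℝ Y)
    (f : Euc n → ℝ) (g : Euc m → ℝ)
    (hf : ConvexOn ℝ Set.univ f)
    (hg : ConvexOn ℝ Set.univ g)
    (A : Euc n →L[ℝ] Euc m)
    (γ μ : ℝ) (hγ : 0 < γ) (hμ : 0 < μ)
    (φ : Euc m → ℝ) (φ' : Euc m → Euc m)
    (hφg : ∀ z, HasGradientAt φ (φ' z) z) (hφcv : ConvexOn ℝ Set.univ φ)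
    (ψ : Euc n → ℝ) (ψ' : Euc n → Euc n)
    (hψg : ∀ z, HasGradientAt ψ (ψ' z) z) (hψcv : ConvexOn ℝ Set.univ ψ)
    (x : ℕ → Euc n) (yt y : ℕ → Euc m)
    (hytmem : ∀ k, yt (k + 1) ∈ Y)
    (hytmax : ∀ k, ∀ z ∈ Y, -g z + ⟪A (x k), z⟫ - γ * Breg φ φ' z (y k) ≤
      -g (yt (k + 1)) + ⟪A (x k), yt (k + 1)⟫ - γ * Breg φ φ' (yt (k + 1)) (y k))
    (hxmem : ∀ k, x (k + 1) ∈ X)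
    (hxmin : ∀ k, ∀ z ∈ X,
      f (x (k + 1)) + ⟪A (x (k + 1)), yt (k + 1)⟫ + μ * Breg ψ ψ' (x (k + 1)) (x k) ≤
        f z + ⟪A z, yt (k + 1)⟫ + μ * Breg ψ ψ' z (x k))
    (hymem : ∀ k, y (k + 1) ∈ Y)
    (hymax : ∀ k, ∀ z ∈ Y, -g z + ⟪A (x (k + 1)), z⟫ - γ * Breg φ φ' z (y k) ≤
      -g (y (k + 1)) + ⟪A (x (k + 1)), y (k + 1)⟫ - γ * Breg φ φ' (y (k + 1)) (y k))
    (ϱ α : ℝ) (hϱ : 0 < ϱ) (hα : 0 < α)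
    (hφsc : ConvexOn ℝ Set.univ (fun z => φ z - ϱ / 2 * ‖z‖ ^ 2))
    (hαϱγ : 1 ≤ α * ϱ * γ)
    (φn : Euc n → ℝ) (φn' : Euc n → Euc n)
    (hφng : ∀ z, HasGradientAt φn (φn' z) z)
    (hφnsc : ConvexOn ℝ Set.univ (fun z => φn z - ϱ / 2 * ‖z‖ ^ 2))
    (L0 : ℝ) (hL0pos : 0 < L0)
    (hL0le : L0 ≤ ϱ * μ / (α * ‖(ContinuousLinearMap.adjoint A).comp A‖))
    (hLψφ : ConvexOn ℝ Set.univ (fun z => L0 * ψ z - φn z))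
    (N : ℕ) (hN : 0 < N) :
    ∀ xx ∈ X, ∀ yy ∈ Y,
      Lag f g A ((N : ℝ)⁻¹ • ∑ k ∈ Finset.Icc 1 N, x k) yy
          - Lag f g A xx ((N : ℝ)⁻¹ • ∑ k ∈ Finset.Icc 1 N, yt k) ≤
        (1 / (N : ℝ)) * (γ * Breg φ φ' yy (y 0) + μ * Breg ψ ψ' xx (x 0)) := by
  intro xx hxx yy hyy
  have hψ (u v : Euc n) : ϱ / 2 * ‖u - v‖ ^ 2 ≤ L0 * Breg ψ ψ' u v :=
    (half_mul_sq_norm_sub_le_breg hφnsc hφng u v).trans (breg_le_const_mul_breg hLψφ hψg hφng u v)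
  have hcoupling := inner_apply_sub_le_add_breg A hϱ.le hμ.le hγ.le hL0pos
    (A.mul_sq_opNorm_le_of_le_div hϱ.le hμ.le hγ.le hα hL0pos.le hαϱγ hL0le) hψ
    (half_mul_sq_norm_sub_le_breg hφsc hφg)
  set D : ℕ → ℝ := fun k => γ * Breg φ φ' yy (y k) + μ * Breg ψ ψ' xx (x k) with hD
  have hstep (k : ℕ) : Lag f g A (x (k + 1)) yy - Lag f g A xx (yt (k + 1)) ≤ D k - D (k + 1) := by
    have := spida_step_lag_sub_le A hXcv hYcv hf hg hγ.le hφcv hφg hψg hcoupling (hytmem k)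
      (isMinOn_iff.2 fun z hz => by unfold Lag; linarith [hytmax k z hz]) (hxmem k)
      (isMinOn_iff.2 fun z hz => by unfold Lag; linarith [hxmin k z hz]) (hymem k)
      (isMinOn_iff.2 fun z hz => by unfold Lag; linarith [hymax k z hz]) hxx hyy
    rw [hD]
    linarith
  have hDN : 0 ≤ D N := add_nonneg (mul_nonneg hγ.le (breg_nonneg hφcv hφg _ _))
    (mul_nonneg hμ.le (breg_nonneg hψcv hψg _ _))
  calc _ ≤ (N : ℝ)⁻¹ * ∑ k ∈ Icc 1 N, (Lag f g A (x k) yy - Lag f g A xx (yt k)) := by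
        simpa using lag_average_sub_le A (nonempty_Icc.2 hN) hf hg x yt xx yy
    _ ≤ (N : ℝ)⁻¹ * (D 0 - D N) := by
        gcongr
        exact sum_Icc_le_sub_of_le_sub_succ hstep N
    _ ≤ _ := by
        rw [one_div]
        gcongr
        linarith

/-- ergodic `O(1/N)` convergence rate of SPIDA. -/
theorem spida_ergodic_rate {n m : ℕ}
    (X : Set (Euc n)) (Y : Set (Euc m))
    (hXne : X.Nonempty) (hXcl : IsClosed X) (hXcv : Convex ℝ X)
    (hYne : Y.Nonempty) (hYcl : IsClosed Y) (hYcv : Convex ℝ Y)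
    (f : Euc n → ℝ) (g : Euc m → ℝ)
    (hf : ConvexOn ℝ Set.univ f) (hflsc : LowerSemicontinuous f)
    (hg : ConvexOn ℝ Set.univ g) (hglsc : LowerSemicontinuous g)
    (A : Euc n →L[ℝ] Euc m)
    (γ μ : ℝ) (hγ : 0 < γ) (hμ : 0 < μ)
    (φ : Euc m → ℝ) (φ' : Euc m → Euc m)
    (hφg : ∀ z, HasGradientAt φ (φ' z) z) (hφcv : ConvexOn ℝ Set.univ φ)
    (ψ : Euc n → ℝ) (ψ' : Euc n → Euc n)
    (hψg : ∀ z, HasGradientAt ψ (ψ' z) z) (hψcv : ConvexOn ℝ Set.univ ψ)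
    (x : ℕ → Euc n) (yt y : ℕ → Euc m)
    (hx0 : x 0 ∈ X) (hy0 : y 0 ∈ Y)
    (hytmem : ∀ k, yt (k + 1) ∈ Y)
    (hytmax : ∀ k, ∀ z ∈ Y, -g z + ⟪A (x k), z⟫ - γ * Breg φ φ' z (y k) ≤
      -g (yt (k + 1)) + ⟪A (x k), yt (k + 1)⟫ - γ * Breg φ φ' (yt (k + 1)) (y k))
    (hxmem : ∀ k, x (k + 1) ∈ X)
    (hxmin : ∀ k, ∀ z ∈ X,
      f (x (k + 1)) + ⟪A (x (k + 1)), yt (k + 1)⟫ + μ * Breg ψ ψ' (x (k + 1)) (x k) ≤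
        f z + ⟪A z, yt (k + 1)⟫ + μ * Breg ψ ψ' z (x k))
    (hymem : ∀ k, y (k + 1) ∈ Y)
    (hymax : ∀ k, ∀ z ∈ Y, -g z + ⟪A (x (k + 1)), z⟫ - γ * Breg φ φ' z (y k) ≤
      -g (y (k + 1)) + ⟪A (x (k + 1)), y (k + 1)⟫ - γ * Breg φ φ' (y (k + 1)) (y k))
    (ϱ α : ℝ) (hϱ : 0 < ϱ) (hα : 0 < α)
    (hφsc : ConvexOn ℝ Set.univ (fun z => φ z - ϱ / 2 * ‖z‖ ^ 2))
    (hαϱγ : 1 ≤ α * ϱ * γ)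
    (φn : Euc n → ℝ) (φn' : Euc n → Euc n)
    (hφng : ∀ z, HasGradientAt φn (φn' z) z)
    (hφnsc : ConvexOn ℝ Set.univ (fun z => φn z - ϱ / 2 * ‖z‖ ^ 2))
    (L0 : ℝ) (hL0pos : 0 < L0)
    (hL0le : L0 ≤ ϱ * μ / (α * ‖(ContinuousLinearMap.adjoint A).comp A‖))
    (hLψφ : ConvexOn ℝ Set.univ (fun z => L0 * ψ z - φn z))
    (N : ℕ) (hN : 0 < N) :
    ∀ xx ∈ X, ∀ yy ∈ Y,
      Lag f g A ((N : ℝ)⁻¹ • ∑ k ∈ Finset.Icc 1 N, x k) yy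
          - Lag f g A xx ((N : ℝ)⁻¹ • ∑ k ∈ Finset.Icc 1 N, yt k) ≤
        (1 / (N : ℝ)) * (γ * Breg φ φ' yy (y 0) + μ * Breg ψ ψ' xx (x 0)) :=
  spida_ergodic_rate_general X Y hXcv hYcv f g hf hg A γ μ hγ hμ φ φ' hφg hφcv ψ ψ' hψg hψcv x yt y
    hytmem hytmax hxmem hxmin hymem hymax ϱ α hϱ hα hφsc hαϱγ φn φn' hφng hφnsc L0 hL0pos hL0le hLψφ
    N hN
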